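/- If f is tie-free, then for priors π_1 ≥ π_2 ≥ … ≥ π_m in [0,1] and nonnegative weights z_ij (1 ≤ i < j ≤ m), the U^m AUC risk is an affine function of the PN-AUC risk: R_{U^m}(f) = Σ_{1≤i<j≤m} z_ij·R_ij(f) = s·R_PN(f) + C, where s = Σ_{1≤i<j≤m} z_ij·(π_i − π_j) and C = Σ_{1≤i<j≤m} z_ij·C_ij with C_ij = (π_i·π_j + (1−π_i)·(1−π_j))/2 + (1−π_i)·π_j, neither s nor C depending on f. -/

import Mathlib

open MeasureTheory

/-- The ranking risk `R(μ,ν)(f) = (μ ⊗ ν){(x,x') : f(x) < f(x')}` (as a real number). -/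
noncomputable def rankRisk {X : Type*} [MeasurableSpace X]
    (μ ν : Measure X) (f : X → ℝ) : ℝ :=
  ((μ.prod ν) {p : X × X | f p.1 < f p.2}).toReal

/-- The mixture `p_π = π·p_P + (1−π)·p_N`. -/
noncomputable def mix {X : Type*} [MeasurableSpace X]
    (pP pN : Measure X) (π : ℝ) : Measure X :=
  ENNReal.ofReal π • pP + ENNReal.ofReal (1 - π) • pN

/-- `f` is tie-free: ties have probability zero under every product of the
class-conditional distributions. -/
def TieFree {X : Type*} [MeasurableSpace X] (pP pN : Measure X) (f : X → ℝ) : Prop :=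
  ∀ μ ∈ ({pP, pN} : Set (Measure X)), ∀ ν ∈ ({pP, pN} : Set (Measure X)),
    (μ.prod ν) {p : X × X | f p.1 = f p.2} = 0

/-!
The ranking risk is bilinear in the pair of measures, so `R(p_a, p_b)` expands into the four
risks `R(p_P, p_P)`, `R(p_P, p_N)`, `R(p_N, p_P)`, `R(p_N, p_N)`. Without ties,
`R(μ, ν) + R(ν, μ) = 1`, which gives `R(p_P, p_P) = R(p_N, p_N) = 1/2` and
`R(p_N, p_P) = 1 - R_PN`; hence each `R_ij` is affine in `R_PN`, with slope `π_i - π_j`.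
-/

section RankRisk

variable {X : Type*} [MeasurableSpace X]

lemma rankRisk_eq_measureReal (μ ν : Measure X) (f : X → ℝ) :
    rankRisk μ ν f = (μ.prod ν).real {p : X × X | f p.1 < f p.2} :=
  rfl

instance isFiniteMeasure_mix (pP pN : Measure X) [IsFiniteMeasure pP] [IsFiniteMeasure pN]
    (a : ℝ) : IsFiniteMeasure (mix pP pN a) :=
  have := pP.smul_finite (ENNReal.ofReal_ne_top (r := a))
  have := pN.smul_finite (ENNReal.ofReal_ne_top (r := 1 - a))
  inferInstanceAs (IsFiniteMeasure (_ + _))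

lemma rankRisk_mix_left (pP pN ν : Measure X) [IsFiniteMeasure pP] [IsFiniteMeasure pN]
    [IsFiniteMeasure ν] (f : X → ℝ) {a : ℝ} (ha : a ∈ Set.Icc (0 : ℝ) 1) :
    rankRisk (mix pP pN a) ν f = a * rankRisk pP ν f + (1 - a) * rankRisk pN ν f := by
  simp only [rankRisk_eq_measureReal, mix, Measure.add_prod, Measure.prod_smul_left]
  rw [measureReal_add_apply (ENNReal.mul_ne_top ENNReal.ofReal_ne_top (measure_ne_top _ _))
      (ENNReal.mul_ne_top ENNReal.ofReal_ne_top (measure_ne_top _ _)),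
    measureReal_ennreal_smul_apply, measureReal_ennreal_smul_apply,
    ENNReal.toReal_ofReal ha.1, ENNReal.toReal_ofReal (sub_nonneg.2 ha.2)]

lemma rankRisk_mix_right (μ pP pN : Measure X) [IsFiniteMeasure μ] [IsFiniteMeasure pP]
    [IsFiniteMeasure pN] (f : X → ℝ) {b : ℝ} (hb : b ∈ Set.Icc (0 : ℝ) 1) :
    rankRisk μ (mix pP pN b) f = b * rankRisk μ pP f + (1 - b) * rankRisk μ pN f := by
  simp only [rankRisk_eq_measureReal, mix, Measure.prod_add, Measure.prod_smul_right]
  rw [measureReal_add_apply (ENNReal.mul_ne_top ENNReal.ofReal_ne_top (measure_ne_top _ _))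
      (ENNReal.mul_ne_top ENNReal.ofReal_ne_top (measure_ne_top _ _)),
    measureReal_ennreal_smul_apply, measureReal_ennreal_smul_apply,
    ENNReal.toReal_ofReal hb.1, ENNReal.toReal_ofReal (sub_nonneg.2 hb.2)]

lemma rankRisk_add_rankRisk_swap (μ ν : Measure X) [IsProbabilityMeasure μ]
    [IsProbabilityMeasure ν] {f : X → ℝ} (hf : Measurable f)
    (hties : (μ.prod ν) {p : X × X | f p.1 = f p.2} = 0) :
    rankRisk μ ν f + rankRisk ν μ f = 1 := by
  have hlt : MeasurableSet {p : X × X | f p.1 < f p.2} :=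
    measurableSet_lt (hf.comp measurable_fst) (hf.comp measurable_snd)
  have hswap : rankRisk ν μ f = (μ.prod ν).real {p : X × X | f p.2 < f p.1} := by
    rw [rankRisk_eq_measureReal, ← Measure.prod_swap, map_measureReal_apply measurable_swap hlt]
    rfl
  have hcompl : {p : X × X | f p.2 < f p.1}
      =ᵐ[μ.prod ν] ({p : X × X | f p.1 < f p.2}ᶜ : Set (X × X)) := by
    have hsplit : {p : X × X | f p.1 < f p.2}ᶜ
        = {p : X × X | f p.2 < f p.1} ∪ {p : X × X | f p.1 = f p.2} := by
      ext p
      simp only [Set.mem_compl_iff, Set.mem_union, Set.mem_ofPred_eq, not_lt]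
      exact le_iff_lt_or_eq.trans (or_congr_right eq_comm)
    rw [hsplit]
    exact (union_ae_eq_left_of_ae_eq_empty (ae_eq_empty.2 hties)).symm
  rw [hswap, measureReal_congr hcompl, probReal_compl_eq_one_sub hlt, rankRisk_eq_measureReal]
  ring

lemma rankRisk_self (μ : Measure X) [IsProbabilityMeasure μ] {f : X → ℝ} (hf : Measurable f)
    (hties : (μ.prod μ) {p : X × X | f p.1 = f p.2} = 0) :
    rankRisk μ μ f = 1 / 2 := by
  linarith [rankRisk_add_rankRisk_swap μ μ hf hties]

lemma rankRisk_mix_mix_of_tieFree (pP pN : Measure X) [IsProbabilityMeasure pP]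
    [IsProbabilityMeasure pN] {f : X → ℝ} (hf : Measurable f) (htf : TieFree pP pN f)
    {a b : ℝ} (ha : a ∈ Set.Icc (0 : ℝ) 1) (hb : b ∈ Set.Icc (0 : ℝ) 1) :
    rankRisk (mix pP pN a) (mix pP pN b) f =
      (a - b) * rankRisk pP pN f + ((a * b + (1 - a) * (1 - b)) / 2 + (1 - a) * b) := by
  have hNP := rankRisk_add_rankRisk_swap pP pN hf (htf pP (by simp) pN (by simp))
  rw [rankRisk_mix_left _ _ _ _ ha, rankRisk_mix_right _ _ _ _ hb,
    rankRisk_mix_right _ _ _ _ hb, rankRisk_self pP hf (htf pP (by simp) pP (by simp)),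
    rankRisk_self pN hf (htf pN (by simp) pN (by simp)), eq_sub_of_add_eq' hNP]
  ring

end RankRisk

theorem um_risk_affine_in_pn_risk_general {X : Type*} [MeasurableSpace X]
    (pP pN : Measure X) [IsProbabilityMeasure pP] [IsProbabilityMeasure pN]
    (f : X → ℝ) (hf : Measurable f) (htf : TieFree pP pN f)
    (m : ℕ) (π : Fin m → ℝ) (hπ : ∀ i, π i ∈ Set.Icc (0 : ℝ) 1)
    (z : Fin m → Fin m → ℝ) :
    ∑ i : Fin m, ∑ j ∈ Finset.Ioi i,
        z i j * rankRisk (mix pP pN (π i)) (mix pP pN (π j)) f =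
      (∑ i : Fin m, ∑ j ∈ Finset.Ioi i, z i j * (π i - π j)) * rankRisk pP pN f
      + ∑ i : Fin m, ∑ j ∈ Finset.Ioi i,
          z i j * ((π i * π j + (1 - π i) * (1 - π j)) / 2 + (1 - π i) * π j) := by
  simp only [Finset.sum_mul, ← Finset.sum_add_distrib]
  refine Finset.sum_congr rfl fun i _ => Finset.sum_congr rfl fun j _ => ?_
  rw [rankRisk_mix_mix_of_tieFree pP pN hf htf (hπ i) (hπ j)]
  ring

/-- for tie-free `f`, weakly decreasing priors and nonnegative weights,
the U^m AUC risk `Σ_{i<j} z_ij·R_ij(f)` is an affine function `s·R_PN(f) + C` of the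
PN-AUC risk, with `s = Σ_{i<j} z_ij·(π_i − π_j)` and `C = Σ_{i<j} z_ij·C_ij`. -/
theorem um_risk_affine_in_pn_risk {X : Type*} [MeasurableSpace X]
    (pP pN : Measure X) [IsProbabilityMeasure pP] [IsProbabilityMeasure pN]
    (f : X → ℝ) (hf : Measurable f) (htf : TieFree pP pN f)
    (m : ℕ) (π : Fin m → ℝ) (hπ : ∀ i, π i ∈ Set.Icc (0 : ℝ) 1)
    (hdec : Antitone π)
    (z : Fin m → Fin m → ℝ) (hz : ∀ i j, i < j → 0 ≤ z i j) :
    ∑ i : Fin m, ∑ j ∈ Finset.Ioi i,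
        z i j * rankRisk (mix pP pN (π i)) (mix pP pN (π j)) f =
      (∑ i : Fin m, ∑ j ∈ Finset.Ioi i, z i j * (π i - π j)) * rankRisk pP pN f
      + ∑ i : Fin m, ∑ j ∈ Finset.Ioi i,
          z i j * ((π i * π j + (1 - π i) * (1 - π j)) / 2 + (1 - π i) * π j) :=
  um_risk_affine_in_pn_risk_general pP pN f hf htf m π hπ z
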